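/- The projectors Π_p satisfy the shifting relations: (α)·Π_p = Π_{p+1}·(α) for every covector α ∈ V*, and Π_p·(v) = (v)·Π_{p+1} for every vector v ∈ V (with the convention Π_{−1} = 0 and Π_{n+1} = 0). -/

import Mathlib

noncomputable section

open CliffordAlgebra

variable (F : Type*) [Field F] (V : Type*) [AddCommGroup V] [Module F V]

/-- The quadratic form `Q[v ⊕ α] = α v` on `W = V ⊕ V*`. -/
def Qf : QuadraticForm F (V × Module.Dual F V) where
  toFun w := w.2 w.1
  toFun_smul a w := by simp [smul_eq_mul, mul_assoc]
  exists_companion' :=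
    ⟨LinearMap.mk₂ F (fun w w' => w.2 w'.1 + w'.2 w.1)
      (fun m m' n => by simp; ring) (fun c m n => by simp; ring)
      (fun m n n' => by simp; ring) (fun c m n => by simp; ring),
     fun w w' => by simp; ring⟩

/-- Image of a vector `v ∈ V` in the Clifford algebra. -/
def ιv (v : V) : CliffordAlgebra (Qf F V) := ι (Qf F V) (v, 0)

/-- Image of a covector `α ∈ V*` in the Clifford algebra. -/
def ιd (α : Module.Dual F V) : CliffordAlgebra (Qf F V) := ι (Qf F V) ((0 : V), α)

variable {n : ℕ} (bV : Module.Basis (Fin n) F V)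

/-- The fundamental idempotent `P = N̄₁⋯N̄ₙ` with `N̄ⱼ = (eⱼ)(eʲ)`. -/
def Pel : CliffordAlgebra (Qf F V) :=
  (List.ofFn fun j : Fin n => ιv F V (bV j) * ιd F V (bV.coord j)).prod

/-- The projector `Π_p = (p!)⁻¹ Σ_{j₁,…,j_p} (e^{j₁})⋯(e^{j_p}) P (e_{j_p})⋯(e_{j₁})`. -/
def Pip (p : ℕ) : CliffordAlgebra (Qf F V) :=
  ((p.factorial : F))⁻¹ •
    ∑ j : Fin p → Fin n,
      (List.ofFn fun a => ιd F V (bV.coord (j a))).prod * Pel F V bV *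
        (List.ofFn fun a => ιv F V (bV (j a))).reverse.prod

/-!
Write `T x = ∑ₖ (eᵏ) x (eₖ)`, so that `p! Π_p = Tᵖ P`. Anticommutation gives
`(α) T x = -T ((α) x)`, and the relation `(eₖ)(α) + (α)(eₖ) = α(eₖ)` gives
`T x (α) = (α) x - T (x (α))`. Since `P (α) = 0`, induction on `p` yields
`T^{p+1} P (α) = (p+1) (α) Tᵖ P`; dividing by `(p+1)!` gives the first relation.
The second is its mirror image, starting from `(v) P = 0`.
-/

namespace List

variable {M : Type*} [MonoidWithZero M] {l : List M} {x : M}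

theorem mul_prod_eq_zero_of_commute_or (h : ∀ z ∈ l, Commute x z ∨ x * z = 0)
    (hl : ∃ z ∈ l, x * z = 0) : x * l.prod = 0 := by
  induction l with
  | nil => simp at hl
  | cons z t ih =>
    rw [prod_cons, ← mul_assoc]
    by_cases hxz : x * z = 0
    · rw [hxz, zero_mul]
    have ht : ∃ y ∈ t, x * y = 0 := by
      obtain ⟨y, hy, hxy⟩ := hl
      exact ⟨y, (mem_cons.1 hy).resolve_left (by rintro rfl; exact hxz hxy), hxy⟩
    rw [((h z mem_cons_self).resolve_right hxz).eq, mul_assoc,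
      ih (fun y hy => h y (mem_cons_of_mem z hy)) ht, mul_zero]

theorem prod_mul_eq_zero_of_commute_or (h : ∀ z ∈ l, Commute z x ∨ z * x = 0)
    (hl : ∃ z ∈ l, z * x = 0) : l.prod * x = 0 := by
  induction l using List.reverseRecOn with
  | nil => simp at hl
  | append_singleton t z ih =>
    rw [prod_append, prod_singleton, mul_assoc]
    by_cases hzx : z * x = 0
    · rw [hzx, mul_zero]
    have ht : ∃ y ∈ t, y * x = 0 := by
      obtain ⟨y, hy, hyx⟩ := hl
      refine ⟨y, ?_, hyx⟩
      rcases mem_append.1 hy with hy | hy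
      · exact hy
      · rw [mem_singleton.1 hy] at hyx; exact absurd hyx hzx
    rw [((h z (mem_append_right t (mem_singleton_self z))).resolve_right hzx).eq, ← mul_assoc,
      ih (fun y hy => h y (mem_append_left [z] hy)) ht, zero_mul]

end List

theorem inv_factorial_succ_mul_succ {K : Type*} [DivisionRing K] [CharZero K] (p : ℕ) :
    ((p + 1).factorial : K)⁻¹ * (p + 1 : ℕ) = (p.factorial : K)⁻¹ := by
  rw [Nat.factorial_succ, Nat.cast_mul, mul_inv_rev, mul_assoc,
    inv_mul_cancel₀ (Nat.cast_ne_zero.2 p.succ_ne_zero), mul_one]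

namespace AddMonoidHom

variable {A : Type*} [Ring A] (T : A →+ A) {a x : A}

theorem iterate_succ_apply_mul (hTa : ∀ y, T y * a = a * y - T (y * a))
    (haT : ∀ y, a * T y = -T (a * y)) (hx : x * a = 0) (p : ℕ) :
    T^[p + 1] x * a = (p + 1) • (a * T^[p] x) := by
  induction p with
  | zero => simp [hTa, hx]
  | succ p ih =>
    calc T^[p + 2] x * a = a * T^[p + 1] x - T (T^[p + 1] x * a) := by
          rw [Function.iterate_succ_apply', hTa]
      _ = a * T^[p + 1] x + (p + 1) • (a * T^[p + 1] x) := by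
          have hT : T (a * T^[p] x) = -(a * T^[p + 1] x) := by
            rw [Function.iterate_succ_apply', haT, neg_neg]
          rw [ih, map_nsmul, hT, smul_neg, sub_neg_eq_add]
      _ = (p + 2) • (a * T^[p + 1] x) := by rw [add_comm, ← succ_nsmul]

theorem mul_iterate_succ_apply (haT : ∀ y, a * T y = y * a - T (a * y))
    (hTa : ∀ y, T y * a = -T (y * a)) (hx : a * x = 0) (p : ℕ) :
    a * T^[p + 1] x = (p + 1) • (T^[p] x * a) := by
  induction p with
  | zero => simp [haT, hx]
  | succ p ih =>
    calc a * T^[p + 2] x = T^[p + 1] x * a - T (a * T^[p + 1] x) := by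
          rw [Function.iterate_succ_apply', haT]
      _ = T^[p + 1] x * a + (p + 1) • (T^[p + 1] x * a) := by
          have hT : T (T^[p] x * a) = -(T^[p + 1] x * a) := by
            rw [Function.iterate_succ_apply', hTa, neg_neg]
          rw [ih, map_nsmul, hT, smul_neg, sub_neg_eq_add]
      _ = (p + 2) • (T^[p + 1] x * a) := by rw [add_comm, ← succ_nsmul]

end AddMonoidHom

section Clifford

variable {F V}

theorem Qf_apply (w : V × Module.Dual F V) : Qf F V w = w.2 w.1 := rfl

theorem ιd_mul_self (α : Module.Dual F V) : ιd F V α * ιd F V α = 0 := by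
  rw [ιd, ι_sq_scalar]; simp [Qf_apply]

theorem ιv_mul_self (v : V) : ιv F V v * ιv F V v = 0 := by
  rw [ιv, ι_sq_scalar]; simp [Qf_apply]

theorem ιd_mul_ιd (α β : Module.Dual F V) :
    ιd F V α * ιd F V β = -(ιd F V β * ιd F V α) :=
  ι_mul_ι_comm_of_isOrtho (by simp [QuadraticMap.IsOrtho, Qf_apply])

theorem ιv_mul_ιv (v w : V) : ιv F V v * ιv F V w = -(ιv F V w * ιv F V v) :=
  ι_mul_ι_comm_of_isOrtho (by simp [QuadraticMap.IsOrtho, Qf_apply])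

theorem ιv_mul_ιd (v : V) (α : Module.Dual F V) :
    ιv F V v * ιd F V α = algebraMap F _ (α v) - ιd F V α * ιv F V v := by
  rw [ιv, ιd, ι_mul_ι_comm]; simp [QuadraticMap.polar, Qf_apply]

theorem ιv_mul_ιd_of_apply_eq_zero {v : V} {α : Module.Dual F V} (h : α v = 0) :
    ιv F V v * ιd F V α = -(ιd F V α * ιv F V v) := by
  rw [ιv_mul_ιd, h, map_zero, zero_sub]

theorem commute_ιv_mul_ιd_ιd {v : V} (β : Module.Dual F V) {α : Module.Dual F V}
    (h : α v = 0) : Commute (ιv F V v * ιd F V β) (ιd F V α) := by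
  rw [commute_iff_eq, mul_assoc, ιd_mul_ιd, mul_neg, ← mul_assoc,
    ιv_mul_ιd_of_apply_eq_zero h, neg_mul, neg_neg, mul_assoc]

theorem commute_ιv_ιv_mul_ιd {v : V} (w : V) {β : Module.Dual F V}
    (h : β v = 0) : Commute (ιv F V v) (ιv F V w * ιd F V β) := by
  rw [commute_iff_eq, ← mul_assoc, ιv_mul_ιv, neg_mul, mul_assoc,
    ιv_mul_ιd_of_apply_eq_zero h, mul_neg, neg_neg, mul_assoc]

theorem ιd_eq_comp_inr (α : Module.Dual F V) :
    ιd F V α = (ι (Qf F V) ∘ₗ LinearMap.inr F V (Module.Dual F V)) α := rfl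

theorem ιv_eq_comp_inl (v : V) :
    ιv F V v = (ι (Qf F V) ∘ₗ LinearMap.inl F V (Module.Dual F V)) v := rfl

end Clifford

section Basis

variable {F V} {n : ℕ} {bV : Module.Basis (Fin n) F V}

theorem sum_smul_ιd_coord (α : Module.Dual F V) :
    ∑ k, α (bV k) • ιd F V (bV.coord k) = ιd F V α := by
  simp_rw [ιd_eq_comp_inr, ← map_smul, ← map_sum, bV.sum_dual_apply_smul_coord]

theorem sum_coord_smul_ιv (v : V) : ∑ k, bV.coord k v • ιv F V (bV k) = ιv F V v := by
  simp_rw [ιv_eq_comp_inl, ← map_smul, ← map_sum, Module.Basis.coord_apply, bV.sum_repr]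

theorem coord_apply_of_ne {j k : Fin n} (h : j ≠ k) : bV.coord k (bV j) = 0 := by
  simp [Module.Basis.coord_apply, h]

theorem Pel_mul_ιd_coord (k : Fin n) : Pel F V bV * ιd F V (bV.coord k) = 0 := by
  refine List.prod_mul_eq_zero_of_commute_or (fun z hz => ?_)
    ⟨_, List.mem_ofFn.2 ⟨k, rfl⟩, ?_⟩
  · obtain ⟨j, rfl⟩ := List.mem_ofFn.1 hz
    rcases eq_or_ne j k with rfl | hjk
    · exact Or.inr (by rw [mul_assoc, ιd_mul_self, mul_zero])
    · exact Or.inl (commute_ιv_mul_ιd_ιd _ (coord_apply_of_ne hjk))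
  · rw [mul_assoc, ιd_mul_self, mul_zero]

theorem ιv_basis_mul_Pel (k : Fin n) : ιv F V (bV k) * Pel F V bV = 0 := by
  refine List.mul_prod_eq_zero_of_commute_or (fun z hz => ?_)
    ⟨_, List.mem_ofFn.2 ⟨k, rfl⟩, ?_⟩
  · obtain ⟨j, rfl⟩ := List.mem_ofFn.1 hz
    rcases eq_or_ne j k with rfl | hjk
    · exact Or.inr (by rw [← mul_assoc, ιv_mul_self, zero_mul])
    · exact Or.inl (commute_ιv_ιv_mul_ιd _ (coord_apply_of_ne hjk.symm))
  · rw [← mul_assoc, ιv_mul_self, zero_mul]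

theorem Pel_mul_ιd (α : Module.Dual F V) : Pel F V bV * ιd F V α = 0 := by
  simp [← sum_smul_ιd_coord (bV := bV) α, Finset.mul_sum, Pel_mul_ιd_coord]

theorem ιv_mul_Pel (v : V) : ιv F V v * Pel F V bV = 0 := by
  simp [← sum_coord_smul_ιv (bV := bV) v, Finset.sum_mul, ιv_basis_mul_Pel]

end Basis

def shift : CliffordAlgebra (Qf F V) →+ CliffordAlgebra (Qf F V) :=
  ∑ k, (AddMonoidHom.mulLeft (ιd F V (bV.coord k))).comp (AddMonoidHom.mulRight (ιv F V (bV k)))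

section Shift

variable {F V} {n : ℕ} {bV : Module.Basis (Fin n) F V}

theorem shift_apply (x : CliffordAlgebra (Qf F V)) :
    shift F V bV x = ∑ k, ιd F V (bV.coord k) * x * ιv F V (bV k) := by
  simp [shift, mul_assoc]

theorem ιd_mul_shift (α : Module.Dual F V) (x : CliffordAlgebra (Qf F V)) :
    ιd F V α * shift F V bV x = -shift F V bV (ιd F V α * x) := by
  rw [shift_apply, shift_apply, Finset.mul_sum, ← Finset.sum_neg_distrib]
  refine Finset.sum_congr rfl fun k _ => ?_
  rw [← mul_assoc, ← mul_assoc, ιd_mul_ιd]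
  noncomm_ring

theorem shift_mul_ιv (v : V) (x : CliffordAlgebra (Qf F V)) :
    shift F V bV x * ιv F V v = -shift F V bV (x * ιv F V v) := by
  rw [shift_apply, shift_apply, Finset.sum_mul, ← Finset.sum_neg_distrib]
  refine Finset.sum_congr rfl fun k _ => ?_
  rw [mul_assoc, ιv_mul_ιv]
  noncomm_ring

theorem shift_mul_ιd (α : Module.Dual F V) (x : CliffordAlgebra (Qf F V)) :
    shift F V bV x * ιd F V α = ιd F V α * x - shift F V bV (x * ιd F V α) := by
  have h : ∀ k, ιd F V (bV.coord k) * x * ιv F V (bV k) * ιd F V α =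
      α (bV k) • ιd F V (bV.coord k) * x -
        ιd F V (bV.coord k) * (x * ιd F V α) * ιv F V (bV k) := by
    intro k
    rw [mul_assoc _ (ιv F V _), ιv_mul_ιd, mul_sub, ← Algebra.commutes, ← Algebra.smul_def]
    simp only [smul_mul_assoc, mul_assoc]
  rw [shift_apply, shift_apply, Finset.sum_mul]
  simp_rw [h]
  rw [Finset.sum_sub_distrib, ← Finset.sum_mul, sum_smul_ιd_coord]

theorem ιv_mul_shift (v : V) (x : CliffordAlgebra (Qf F V)) :
    ιv F V v * shift F V bV x = x * ιv F V v - shift F V bV (ιv F V v * x) := by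
  have h : ∀ k, ιv F V v * (ιd F V (bV.coord k) * x * ιv F V (bV k)) =
      x * bV.coord k v • ιv F V (bV k) -
        ιd F V (bV.coord k) * (ιv F V v * x) * ιv F V (bV k) := by
    intro k
    rw [← mul_assoc, ← mul_assoc, ιv_mul_ιd, sub_mul, sub_mul, ← Algebra.smul_def]
    simp only [mul_smul_comm, smul_mul_assoc, mul_assoc]
  rw [shift_apply, shift_apply, Finset.mul_sum]
  simp_rw [h]
  rw [Finset.sum_sub_distrib, ← Finset.mul_sum, sum_coord_smul_ιv]

end Shift

section Projector

variable {F V} {n : ℕ} {bV : Module.Basis (Fin n) F V}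

theorem sum_prod_ιd_mul_mul_prod_ιv (p : ℕ) (x : CliffordAlgebra (Qf F V)) :
    ∑ j : Fin p → Fin n,
      (List.ofFn fun a => ιd F V (bV.coord (j a))).prod * x *
        (List.ofFn fun a => ιv F V (bV (j a))).reverse.prod = (shift F V bV)^[p] x := by
  induction p with
  | zero => simp
  | succ p ih =>
    rw [Function.iterate_succ_apply', ← ih, shift_apply,
      ← Equiv.sum_comp (Fin.consEquiv fun _ : Fin (p + 1) => Fin n), Fintype.sum_prod_type]
    refine Finset.sum_congr rfl fun k _ => ?_
    rw [Finset.mul_sum, Finset.sum_mul]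
    refine Finset.sum_congr rfl fun j _ => ?_
    simp only [Fin.consEquiv_apply, List.ofFn_succ, Fin.cons_zero, Fin.cons_succ,
      List.prod_cons, List.reverse_cons, List.prod_append, List.prod_nil, mul_one, mul_assoc]

theorem Pip_eq_smul_shift_iterate (p : ℕ) :
    Pip F V bV p = ((p.factorial : F))⁻¹ • (shift F V bV)^[p] (Pel F V bV) := by
  rw [Pip, sum_prod_ιd_mul_mul_prod_ιv]

end Projector

/-- the shifting relations `(α)Π_p = Π_{p+1}(α)` and
`Π_p(v) = (v)Π_{p+1}` (the conventions `Π₋₁ = 0`, `Π_{n+1} = 0` hold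
automatically here, since products of more than `n` isotropic covectors
vanish). -/
theorem stmt19 [CharZero F] :
    (∀ (p : ℕ) (α : Module.Dual F V),
      ιd F V α * Pip F V bV p = Pip F V bV (p + 1) * ιd F V α) ∧
    (∀ (p : ℕ) (v : V),
      Pip F V bV p * ιv F V v = ιv F V v * Pip F V bV (p + 1)) := by
  constructor
  · intro p α
    have h := (shift F V bV).iterate_succ_apply_mul (shift_mul_ιd α) (ιd_mul_shift α)
      (Pel_mul_ιd (bV := bV) α) p
    rw [Pip_eq_smul_shift_iterate, Pip_eq_smul_shift_iterate, smul_mul_assoc, h,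
      ← Nat.cast_smul_eq_nsmul F, smul_smul, inv_factorial_succ_mul_succ, mul_smul_comm]
  · intro p v
    have h := (shift F V bV).mul_iterate_succ_apply (ιv_mul_shift v) (shift_mul_ιv v)
      (ιv_mul_Pel (bV := bV) v) p
    rw [Pip_eq_smul_shift_iterate, Pip_eq_smul_shift_iterate, mul_smul_comm, h,
      ← Nat.cast_smul_eq_nsmul F, smul_smul, inv_factorial_succ_mul_succ, smul_mul_assoc]
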